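/- In K(I P(1,2)) ⊗ ℂ, identified with (ℂ[χ]/⟨(χ−1)(χ²−1)⟩) ⊕ (ℂ[χ]/⟨χ²−1⟩) with generators 1_1 and 1_{−1}, the localized orbifold product of the twisted-sector identity with itself is 1_{−1} ⋆_{LO} 1_{−1} = ((1+χ)²·e(χ) + (1−χ)²)/4 · 1_1, where e(χ) = 1 − χ⁻¹, and this product makes the module into a commutative associative ring with identity 1_1. -/

import Mathlib

open Polynomial

/-- `ℂ[χ]/⟨(χ−1)(χ²−1)⟩`, the K-theory (⊗ℂ) of the untwisted sector of `P(1,2)`. -/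
noncomputable abbrev KA12 : Type :=
  Polynomial ℂ ⧸ Ideal.span
    ({(Polynomial.X - 1) * (Polynomial.X ^ 2 - 1)} : Set (Polynomial ℂ))

/-- `ℂ[χ]/⟨χ²−1⟩`, the K-theory (⊗ℂ) of the twisted sector `𝔅μ₂` of `P(1,2)`. -/
noncomputable abbrev KB12 : Type :=
  Polynomial ℂ ⧸ Ideal.span ({Polynomial.X ^ 2 - 1} : Set (Polynomial ℂ))

noncomputable def mkA12 : Polynomial ℂ →+* KA12 := Ideal.Quotient.mk _
noncomputable def mkB12 : Polynomial ℂ →+* KB12 := Ideal.Quotient.mk _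

/-- `K(I P(1,2)) ⊗ ℂ = A·1₁ ⊕ B·1_{−1}`. -/
noncomputable abbrev KM12 : Type := KA12 × KB12

/-- The localized orbifold product on `K(I P(1,2)) ⊗ ℂ`, extended by the
projection formula from the table `1₁` = identity and
`1_{−1} ⋆ 1_{−1} = Q·1₁`, via the restriction `π : A → B` and the
pushforward `j : B → A` (characterized by `j(p) = p·Q`). -/
noncomputable def kmul12 (π : KA12 →+* KB12) (j : KB12 →ₗ[ℂ] KA12)
    (x y : KM12) : KM12 :=
  (x.1 * y.1 + j (x.2 * y.2), π x.1 * y.2 + x.2 * π y.1)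

/-! Commutativity and the unit `(1, 0)` are formal; associativity follows from the projection formula
`j (π a · b) = a · j b` together with `π (j b) = b · π (j 1)`. For `P(1,2)` the pushforward `j` is
multiplication by `Q`, which is well defined on `ℂ[χ]/⟨χ² − 1⟩` because `(χ² − 1) Q = 0` in
`ℂ[χ]/⟨(χ − 1)(χ² − 1)⟩`; both formulas then hold since `π` is surjective. -/

section ProjectionFormula

variable {A B : Type*} [CommRing A] [CommRing B] (π : A →+* B) (j : B →+ A)

def projFormulaMul (x y : A × B) : A × B :=
  (x.1 * y.1 + j (x.2 * y.2), π x.1 * y.2 + x.2 * π y.1)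

theorem projFormulaMul_comm (x y : A × B) :
    projFormulaMul π j x y = projFormulaMul π j y x := by
  rw [projFormulaMul, projFormulaMul, mul_comm y.1, mul_comm y.2]
  exact Prod.ext rfl (by ring)

theorem projFormulaMul_one_left (x : A × B) : projFormulaMul π j (1, 0) x = x := by
  simp [projFormulaMul]

theorem projFormulaMul_twisted_self : projFormulaMul π j (0, 1) (0, 1) = (j 1, 0) := by
  simp [projFormulaMul]

theorem projFormulaMul_assoc (hj : ∀ a b, j (π a * b) = a * j b)
    (hπj : ∀ b, π (j b) = b * π (j 1)) (x y z : A × B) :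
    projFormulaMul π j (projFormulaMul π j x y) z =
      projFormulaMul π j x (projFormulaMul π j y z) := by
  obtain ⟨x₁, x₂⟩ := x
  obtain ⟨y₁, y₂⟩ := y
  obtain ⟨z₁, z₂⟩ := z
  simp only [projFormulaMul, map_add, map_mul, hπj (x₂ * y₂), hπj (y₂ * z₂)]
  refine Prod.ext ?_ (by ring)
  have h₁ : j (x₂ * y₂) * z₁ = j (π z₁ * (x₂ * y₂)) := by rw [hj, mul_comm]
  have h₂ : x₁ * j (y₂ * z₂) = j (π x₁ * (y₂ * z₂)) := (hj _ _).symm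
  simp only [add_mul, mul_add, h₁, h₂, map_add]
  ring_nf

end ProjectionFormula

theorem kmul12_eq_projFormulaMul (π : KA12 →+* KB12) (j : KB12 →ₗ[ℂ] KA12) :
    kmul12 π j = projFormulaMul π j.toAddMonoidHom := rfl

theorem mkA12_surjective : Function.Surjective mkA12 := Ideal.Quotient.mk_surjective

theorem mkB12_surjective : Function.Surjective mkB12 := Ideal.Quotient.mk_surjective

theorem mkA12_relation : (mkA12 X - 1) * (mkA12 X ^ 2 - 1) = 0 := by
  have : mkA12 ((X - 1) * (X ^ 2 - 1)) = 0 :=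
    Ideal.Quotient.eq_zero_iff_mem.mpr (Ideal.mem_span_singleton_self _)
  simpa using this

/-- `1 - χ (1 + χ - χ²) = (χ - 1)(χ² - 1)`. -/
noncomputable def chiInv12 : KA12 := mkA12 (1 + X - X ^ 2)

theorem mkA12_X_mul_chiInv12 : mkA12 X * chiInv12 = 1 := by
  rw [chiInv12, map_sub, map_add, map_one, map_pow]
  linear_combination -mkA12_relation

noncomputable def Q12 : KA12 :=
  (1 / 4 : ℂ) • ((1 + mkA12 X) ^ 2 * (1 - chiInv12) + (1 - mkA12 X) ^ 2)

theorem mkA12_sq_sub_one_mul_Q12 : mkA12 (X ^ 2 - 1) * Q12 = 0 := by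
  have h : (mkA12 X ^ 2 - 1) * ((1 + mkA12 X) ^ 2 * (1 - chiInv12) + (1 - mkA12 X) ^ 2) = 0 := by
    linear_combination (chiInv12 * (1 + mkA12 X) ^ 2 + mkA12 X - 1) * mkA12_relation
      - (mkA12 X ^ 2 - 1) * (1 + mkA12 X) ^ 2 * mkA12_X_mul_chiInv12
  rw [Q12, mul_smul_comm, map_sub, map_pow, map_one, h, smul_zero]

noncomputable def π12 : KA12 →+* KB12 :=
  Ideal.Quotient.factor <| Ideal.span_singleton_le_span_singleton.mpr <| dvd_mul_left _ _

theorem π12_mk (p : Polynomial ℂ) : π12 (mkA12 p) = mkB12 p := rfl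

noncomputable def j12 : KB12 →ₗ[ℂ] KA12 :=
  Submodule.liftQ ((Ideal.span ({X ^ 2 - 1} : Set ℂ[X])).restrictScalars ℂ)
    ((LinearMap.mulRight ℂ Q12).comp
      (Ideal.Quotient.mkₐ ℂ (Ideal.span ({(X - 1) * (X ^ 2 - 1)} : Set ℂ[X]))).toLinearMap) <| by
    intro p hp
    obtain ⟨q, rfl⟩ := Ideal.mem_span_singleton'.mp hp
    change mkA12 (q * (X ^ 2 - 1)) * Q12 = 0
    rw [map_mul, mul_assoc, mkA12_sq_sub_one_mul_Q12, mul_zero]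

theorem j12_mk (p : Polynomial ℂ) : j12 (mkB12 p) = mkA12 p * Q12 := rfl

theorem j12_one : j12 1 = Q12 := by
  rw [← map_one mkB12, j12_mk, map_one, one_mul]

theorem j12_π12_mul (a : KA12) (b : KB12) : j12 (π12 a * b) = a * j12 b := by
  obtain ⟨p, rfl⟩ := mkA12_surjective a
  obtain ⟨q, rfl⟩ := mkB12_surjective b
  rw [π12_mk, ← map_mul, j12_mk, j12_mk, map_mul, mul_assoc]

theorem π12_j12 (b : KB12) : π12 (j12 b) = b * π12 (j12 1) := by
  obtain ⟨q, rfl⟩ := mkB12_surjective b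
  rw [j12_one, j12_mk, map_mul, π12_mk]

/-- In `K(I P(1,2)) ⊗ ℂ`, the localized orbifold product satisfies
`1_{−1} ⋆ 1_{−1} = ((1+χ)²·e(χ) + (1−χ)²)/4 · 1₁` with `e(χ) = 1 − χ⁻¹`, and it
makes the module into a commutative, associative ring with identity `1₁`. -/
theorem localized_product_P12_ring :
    ∃ (π : KA12 →+* KB12) (j : KB12 →ₗ[ℂ] KA12) (χinv : KA12),
      (∀ p : Polynomial ℂ, π (mkA12 p) = mkB12 p) ∧
      (mkA12 Polynomial.X * χinv = 1) ∧
      (letI χ : KA12 := mkA12 Polynomial.X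
       letI Q : KA12 :=
         (1 / 4 : ℂ) • ((1 + χ) ^ 2 * (1 - χinv) + (1 - χ) ^ 2)
       (∀ p : Polynomial ℂ, j (mkB12 p) = mkA12 p * Q) ∧
       (kmul12 π j ((0 : KA12), (1 : KB12)) ((0 : KA12), (1 : KB12))
          = (Q, (0 : KB12)))) ∧
      (∀ x y : KM12, kmul12 π j x y = kmul12 π j y x) ∧
      (∀ x y z : KM12,
        kmul12 π j (kmul12 π j x y) z = kmul12 π j x (kmul12 π j y z)) ∧
      (∀ x : KM12, kmul12 π j ((1 : KA12), (0 : KB12)) x = x) := by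
  simp only [kmul12_eq_projFormulaMul]
  refine ⟨π12, j12, chiInv12, π12_mk, mkA12_X_mul_chiInv12, ⟨j12_mk, ?_⟩,
    projFormulaMul_comm _ _, projFormulaMul_assoc _ _ j12_π12_mul π12_j12,
    projFormulaMul_one_left _ _⟩
  rw [projFormulaMul_twisted_self]
  exact congrArg (·, 0) j12_one
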